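/- arXiv:1404.1567 — 4 statements merged into one kernel-verified Lean document; each statement's English description precedes it below -/
import Mathlib

section
/- Let n ≥ 3 and let W be the n × n Wielandt matrix: W i j = 1 if (i ≥ 2 and j = i-1) or (i = 1 and j ∈ {n-1, n}), and W i j = 0 otherwise. Then the (n, n-1) entry of W^{n^2-3n+2} is zero. -/
/-- The `n × n` Wielandt matrix: `W i j = 1` iff (`i ≥ 2` and `j = i - 1`) or
(`i = 1` and `j ∈ {n-1, n}`), written here with 0-based indexing via `Fin n`. -/
def wielandt (n : ℕ) : Matrix (Fin n) (Fin n) ℕ := fun i j =>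
  if (1 ≤ i.val ∧ j.val + 1 = i.val) ∨ (i.val = 0 ∧ (j.val = n - 2 ∨ j.val = n - 1))
  then 1 else 0

/-!
A nonzero entry `(W ^ m) i j` is a walk of length `m` from `i` to `j` in the Wielandt digraph.
Along every arc `i → j` the quantity `1 + j - i` is `0`, `n - 1` or `n`, so along a walk
`m + j - i` lies in the additive monoid generated by `n - 1` and `n`. For `i = n - 1`,
`j = n - 2` and `m = (n - 1)(n - 2)` this quantity is `(n - 1) n - (n - 1) - n`, the Frobenius
number of the coprime pair `n - 1, n`, which that monoid misses.
-/

theorem Matrix.exists_add_eq_of_pow_apply_ne_zero {ι R : Type*} [Fintype ι] [DecidableEq ι]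
    [Semiring R] (A : Matrix ι ι R) (φ : ι → ℕ) (S : AddSubmonoid ℕ)
    (hA : ∀ i j, A i j ≠ 0 → ∃ s ∈ S, 1 + φ j = φ i + s) :
    ∀ (m : ℕ) (i j : ι), (A ^ m) i j ≠ 0 → ∃ s ∈ S, m + φ j = φ i + s := by
  intro m
  induction m with
  | zero =>
    intro i j h
    obtain rfl : i = j := by
      by_contra hij
      exact h (by rw [pow_zero, Matrix.one_apply_ne hij])
    exact ⟨0, S.zero_mem, by simp⟩
  | succ m ih =>
    intro i j h
    rw [pow_succ', Matrix.mul_apply] at h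
    obtain ⟨k, -, hk⟩ := Finset.exists_ne_zero_of_sum_ne_zero h
    obtain ⟨s, hs, hik⟩ := hA i k (left_ne_zero_of_mul hk)
    obtain ⟨t, ht, hkj⟩ := ih k j (right_ne_zero_of_mul hk)
    exact ⟨s + t, S.add_mem hs ht, by omega⟩

theorem wielandt_exists_add_eq_of_apply_ne_zero {n : ℕ} (i j : Fin n) (h : wielandt n i j ≠ 0) :
    ∃ s ∈ AddSubmonoid.closure {n - 1, n}, 1 + j.val = i.val + s := by
  unfold wielandt at h
  split_ifs at h with hij
  · rcases hij with ⟨-, hji⟩ | ⟨hi, hj⟩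
    · exact ⟨0, AddSubmonoid.zero_mem _, by omega⟩
    · refine ⟨1 + j.val, AddSubmonoid.subset_closure ?_, by omega⟩
      have := j.isLt
      simp only [Set.mem_insert_iff, Set.mem_singleton_iff]
      omega
  · exact absurd rfl h

theorem Nat.sq_sub_three_mul_add_one_eq {n : ℕ} (hn : 3 ≤ n) :
    n ^ 2 - 3 * n + 1 = (n - 1) * n - (n - 1) - n := by
  obtain ⟨k, rfl⟩ : ∃ k, n = k + 3 := ⟨n - 3, by omega⟩
  rw [show k + 3 - 1 = k + 2 by omega]
  ring_nf
  omega

/-- The `(n, n-1)` entry of the `(n^2 - 3n + 2)`-th power of the Wielandt matrix is zero. -/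
theorem wielandt_pow_entry_zero (n : ℕ) (hn : 3 ≤ n) :
    (wielandt n ^ (n ^ 2 - 3 * n + 2)) ⟨n - 1, by omega⟩ ⟨n - 2, by omega⟩ = 0 := by
  by_contra h
  obtain ⟨s, hs, hlen⟩ := (wielandt n).exists_add_eq_of_pow_apply_ne_zero Fin.val _
    wielandt_exists_add_eq_of_apply_ne_zero _ _ _ h
  have hcop : Nat.Coprime (n - 1) n :=
    (Nat.coprime_self_sub_left (by omega)).2 (Nat.coprime_one_left n)
  have hfrob := (frobeniusNumber_pair hcop (by omega) (by omega)).1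
  rw [← Nat.sq_sub_three_mul_add_one_eq hn] at hfrob
  dsimp only at hlen
  exact hfrob (by convert hs using 1; omega)
end

section
/- Let n ≥ 3 and W the n × n Wielandt matrix. For each k with 1 ≤ k ≤ n^2 - 3n + 2, the set S_k(W, n-1) = { u : (W^k) u (n-1) > 0 } satisfies 2 ≤ |S_k(W, n-1)| ≤ n - 1. -/
open Finset Function

namespace Matrix

section colSupport

variable {ι R : Type*} [Fintype ι] [Zero R] [LT R] [DecidableLT R]

/-- The paper's `S_k(A, c)` is `colSupport (A ^ k) c`. -/
def colSupport (A : Matrix ι ι R) (c : ι) : Finset ι := {u | 0 < A u c}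

@[simp]
theorem mem_colSupport {A : Matrix ι ι R} {c u : ι} : u ∈ colSupport A c ↔ 0 < A u c := by
  simp [colSupport]

end colSupport

variable {ι R : Type*} [Fintype ι] [DecidableEq ι]
  [CommSemiring R] [PartialOrder R] [CanonicallyOrderedAdd R] [NoZeroDivisors R]

theorem pow_succ_apply_pos_iff {A : Matrix ι ι R} {m : ℕ} {u c : ι} :
    0 < (A ^ (m + 1)) u c ↔ ∃ v, 0 < A u v ∧ 0 < (A ^ m) v c := by
  simp [pow_succ', mul_apply, sum_pos_iff, CanonicallyOrderedAdd.mul_pos]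

theorem monotone_card_colSupport_pow [DecidableLT R] {A : Matrix ι ι R} {f : ι → ι}
    (hf : Injective f) (hA : ∀ u, 0 < A (f u) u) (c : ι) :
    Monotone fun k => #(colSupport (A ^ k) c) := by
  refine monotone_nat_of_le_succ fun k => card_le_card_of_injOn f (fun u hu => ?_) hf.injOn
  simp only [mem_coe, mem_colSupport] at hu ⊢
  exact pow_succ_apply_pos_iff.2 ⟨u, hA u, hu⟩

end Matrix

open Matrix

theorem wielandt_apply_pos_iff {n : ℕ} {u v : Fin n} :
    0 < wielandt n u v ↔ v.val + 1 = u.val ∨ u.val = 0 ∧ (v.val = n - 2 ∨ v.val = n - 1) := by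
  unfold wielandt
  split_ifs <;> simp <;> omega

theorem wielandt_finRotate_apply_pos {n : ℕ} (u : Fin n) :
    0 < wielandt n (finRotate n u) u := by
  obtain _ | n := n
  · exact u.elim0
  rw [wielandt_apply_pos_iff, coe_finRotate]
  split_ifs with h <;> simp [h]

/-- A walk of length `m` from `u` to `n - 2`, prefixed by the descent from `n - 2` to `u`
(or by `n - 2 → ⋯ → 0 → n - 1` when `u = n - 1`), is a closed walk at `n - 2`. -/
theorem exists_mem_closure_of_wielandt_pow_apply_pos {n : ℕ} (hn : 2 ≤ n) {c : Fin n}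
    (hc : c.val = n - 2) {m : ℕ} {u : Fin n} (h : 0 < (wielandt n ^ m) u c) :
    ∃ t ∈ AddSubmonoid.closure ({n - 1, n} : Set ℕ), u.val + t = m + (n - 2) := by
  induction m generalizing u with
  | zero =>
    obtain rfl : u = c := by
      by_contra hne
      simp [one_apply, hne] at h
    exact ⟨0, zero_mem _, by omega⟩
  | succ m ih =>
    obtain ⟨v, huv, hv⟩ := pow_succ_apply_pos_iff.1 h
    obtain ⟨t, ht, hvt⟩ := ih hv
    have hgen {a : ℕ} (ha : a = n - 1 ∨ a = n) : a ∈ AddSubmonoid.closure ({n - 1, n} : Set ℕ) :=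
      AddSubmonoid.subset_closure ha
    rcases wielandt_apply_pos_iff.1 huv with huv | ⟨hu, hv | hv⟩
    · exact ⟨t, ht, by omega⟩
    · exact ⟨t + (n - 1), add_mem ht (hgen (.inl rfl)), by omega⟩
    · exact ⟨t + n, add_mem ht (hgen (.inr rfl)), by omega⟩

theorem wielandt_last_notMem_colSupport {n : ℕ} (hn : 3 ≤ n) {c : Fin n}
    (hc : c.val = n - 2) :
    (⟨n - 1, by omega⟩ : Fin n) ∉ colSupport (wielandt n ^ ((n - 1) * (n - 2))) c := by
  intro h
  obtain ⟨t, ht, hlen⟩ :=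
    exists_mem_closure_of_wielandt_pow_apply_pos (by omega) hc (mem_colSupport.1 h)
  have hcop : Nat.Coprime (n - 1) n :=
    (Nat.coprime_self_sub_left (by omega)).2 (Nat.coprime_one_left n)
  have ht_eq : t = (n - 1) * n - (n - 1) - n := by
    obtain ⟨p, rfl⟩ : ∃ p, n = p + 3 := ⟨n - 3, by omega⟩
    simp only [show p + 3 - 1 = p + 2 by omega, show p + 3 - 2 = p + 1 by omega] at hlen ⊢
    ring_nf at hlen ⊢
    omega
  exact (frobeniusNumber_pair hcop (by omega) (by omega)).1 (ht_eq ▸ ht)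

theorem two_le_card_colSupport_wielandt {n : ℕ} (hn : 2 ≤ n) {c : Fin n} (hc : c.val = n - 2) :
    2 ≤ #(colSupport (wielandt n ^ 1) c) := by
  have hsub : ({⟨0, by omega⟩, ⟨n - 1, by omega⟩} : Finset (Fin n)) ⊆
      colSupport (wielandt n ^ 1) c := by
    intro u hu
    rw [mem_insert, mem_singleton] at hu
    rw [mem_colSupport, pow_one, wielandt_apply_pos_iff]
    rcases hu with rfl | rfl <;> simp <;> omega
  calc 2 = #({⟨0, by omega⟩, ⟨n - 1, by omega⟩} : Finset (Fin n)) :=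
        (card_pair (by simp [Fin.ext_iff]; omega)).symm
    _ ≤ _ := card_le_card hsub

/-- For `1 ≤ k ≤ n^2 - 3n + 2`, the set `S_k(W, n-1)` has cardinality between
`2` and `n - 1`. -/
theorem wielandt_S_card (n : ℕ) (hn : 3 ≤ n) (k : ℕ) (hk1 : 1 ≤ k)
    (hk2 : k ≤ n ^ 2 - 3 * n + 2) :
    2 ≤ (Finset.univ.filter
          fun u : Fin n => 0 < (wielandt n ^ k) u ⟨n - 2, by omega⟩).card ∧
    (Finset.univ.filter
          fun u : Fin n => 0 < (wielandt n ^ k) u ⟨n - 2, by omega⟩).card ≤ n - 1 := by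
  set c : Fin n := ⟨n - 2, by omega⟩
  have hc : c.val = n - 2 := rfl
  have hmono := monotone_card_colSupport_pow (finRotate n).injective
    wielandt_finRotate_apply_pos c
  have hk : k ≤ (n - 1) * (n - 2) := by
    obtain ⟨p, rfl⟩ : ∃ p, n = p + 3 := ⟨n - 3, by omega⟩
    simp only [show p + 3 - 1 = p + 2 by omega, show p + 3 - 2 = p + 1 by omega] at hk2 ⊢
    ring_nf at hk2 ⊢
    omega
  have hlt := card_lt_univ_of_notMem (wielandt_last_notMem_colSupport hn hc)
  rw [Fintype.card_fin] at hlt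
  exact ⟨(two_le_card_colSupport_wielandt (by omega) hc).trans (hmono hk1),
    (hmono hk).trans (Nat.le_sub_one_of_lt hlt)⟩
end

section
/- Let A be an n × n nonnegative real matrix. Then A is primitive (i.e., some power A^k has all entries positive) if and only if for every column index j there exists a positive integer k_j such that every entry of column j of A^{k_j} is positive. Moreover, the least k with A^k entrywise positive equals the maximum over j of the least such k_j. -/
/-!
If some row of `A` vanished, that row would vanish in every power, so a positive column of a
power forces every row of `A` to have a positive entry. Then `(A ^ (k + 1)) i j` dominates
`A i m * (A ^ k) m j` for such an `m`, so a positive column of `A ^ k` stays positive in all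
higher powers. The exponents making column `j` positive thus form an upper set `S j` of `ℕ`,
those making all of `A ^ k` positive form `⋂ j, S j`, and the least element of a finite
intersection of upper sets is the largest of their least elements.
-/

theorem Nat.sup_sInf_mem_iInter {ι : Type*} [Fintype ι] {S : ι → Set ℕ}
    (hS : ∀ i, IsUpperSet (S i)) (hne : ∀ i, (S i).Nonempty) :
    Finset.univ.sup (fun i => sInf (S i)) ∈ ⋂ i, S i :=
  Set.mem_iInter.2 fun i =>
    hS i (Finset.le_sup (f := fun i => sInf (S i)) (Finset.mem_univ i)) (Nat.sInf_mem (hne i))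

theorem Nat.sInf_iInter_eq_sup {ι : Type*} [Fintype ι] {S : ι → Set ℕ}
    (hS : ∀ i, IsUpperSet (S i)) (hne : ∀ i, (S i).Nonempty) :
    sInf (⋂ i, S i) = Finset.univ.sup (fun i => sInf (S i)) := by
  have hmem := Nat.sup_sInf_mem_iInter hS hne
  refine le_antisymm (Nat.sInf_le hmem) (Finset.sup_le fun i _ => Nat.sInf_le ?_)
  exact Set.mem_iInter.1 (Nat.sInf_mem ⟨_, hmem⟩) i

namespace Matrix

variable {ι R : Type*} [Fintype ι] [DecidableEq ι] [Semiring R] [PartialOrder R]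
  {A : Matrix ι ι R}

theorem exists_pos_of_pow_apply_pos (hA : ∀ i j, 0 ≤ A i j) {k : ℕ} (hk : 0 < k) {i j : ι}
    (hij : 0 < (A ^ k) i j) : ∃ m, 0 < A i m := by
  by_contra! hrow
  have hzero : ∀ m, A i m = 0 := fun m => ((hA i m).eq_of_not_lt (hrow m)).symm
  obtain ⟨k, rfl⟩ := Nat.exists_eq_succ_of_ne_zero hk.ne'
  rw [pow_succ', mul_apply, Finset.sum_eq_zero fun m _ => by rw [hzero m, zero_mul]] at hij
  exact hij.false

variable [IsStrictOrderedRing R]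

theorem pow_succ_apply_pos (hA : ∀ i j, 0 ≤ A i j) (hrow : ∀ i, ∃ m, 0 < A i m) {k : ℕ}
    {j : ι} (hcol : ∀ i, 0 < (A ^ k) i j) (i : ι) : 0 < (A ^ (k + 1)) i j := by
  obtain ⟨m, hm⟩ := hrow i
  rw [pow_succ', mul_apply]
  exact Finset.sum_pos' (fun x _ => mul_nonneg (hA i x) (pow_apply_nonneg hA k x j))
    ⟨m, Finset.mem_univ m, mul_pos hm (hcol m)⟩

theorem isUpperSet_setOf_pow_col_pos (hA : ∀ i j, 0 ≤ A i j) (hrow : ∀ i, ∃ m, 0 < A i m)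
    (j : ι) : IsUpperSet {k : ℕ | 0 < k ∧ ∀ i, 0 < (A ^ k) i j} := by
  intro k l hkl ⟨hk, hcol⟩
  refine ⟨hk.trans_le hkl, ?_⟩
  induction l, hkl using Nat.le_induction with
  | base => exact hcol
  | succ l _ ih => exact pow_succ_apply_pos hA hrow ih

end Matrix

/-- A nonnegative matrix `A` is primitive iff every column of some power is entirely
positive; moreover the primitive exponent equals the maximum over columns `j` of the
least `k_j` making column `j` of `A^{k_j}` positive. -/
theorem primitive_iff_columns {n : ℕ} (hn : 0 < n) (A : Matrix (Fin n) (Fin n) ℝ)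
    (hA : ∀ i j, 0 ≤ A i j) :
    ((∃ k : ℕ, 0 < k ∧ ∀ i j, 0 < (A ^ k) i j) ↔
      ∀ j : Fin n, ∃ k : ℕ, 0 < k ∧ ∀ i, 0 < (A ^ k) i j) ∧
    ((∃ k : ℕ, 0 < k ∧ ∀ i j, 0 < (A ^ k) i j) →
      sInf {k : ℕ | 0 < k ∧ ∀ i j, 0 < (A ^ k) i j} =
        Finset.univ.sup fun j : Fin n =>
          sInf {k : ℕ | 0 < k ∧ ∀ i, 0 < (A ^ k) i j}) := by
  set S : Fin n → Set ℕ := fun j => {k | 0 < k ∧ ∀ i, 0 < (A ^ k) i j}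
  have hinter : {k : ℕ | 0 < k ∧ ∀ i j, 0 < (A ^ k) i j} = ⋂ j, S j := by
    ext k
    simp only [Set.mem_ofPred_eq, Set.mem_iInter, S]
    exact ⟨fun ⟨hk, h⟩ j => ⟨hk, fun i => h i j⟩,
      fun h => ⟨(h ⟨0, hn⟩).1, fun i j => (h j).2 i⟩⟩
  have hupper (hne : ∀ j, (S j).Nonempty) : ∀ j, IsUpperSet (S j) := by
    obtain ⟨k, hk, hcol⟩ := hne ⟨0, hn⟩
    exact Matrix.isUpperSet_setOf_pow_col_pos hA
      fun i => Matrix.exists_pos_of_pow_apply_pos hA hk (hcol i)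
  have hcols : (∃ k : ℕ, 0 < k ∧ ∀ i j, 0 < (A ^ k) i j) → ∀ j, (S j).Nonempty :=
    fun ⟨k, hk, h⟩ j => ⟨k, hk, fun i => h i j⟩
  refine ⟨⟨hcols, fun hne => ?_⟩, fun hprim => ?_⟩
  · have hmem := Nat.sup_sInf_mem_iInter (hupper hne) hne
    rw [← hinter] at hmem
    exact ⟨_, hmem⟩
  · rw [hinter]
    exact Nat.sInf_iInter_eq_sup (hupper (hcols hprim)) (hcols hprim)
end

section
/- Let n ≥ 3. For every integer t with 1 ≤ t ≤ n, there exists an n × n primitive 0-1 matrix A whose primitive exponent equals t (i.e., A^t has all entries positive but A^{t-1} does not). -/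
/-!
Take the digraph on `0, …, n-1` made of the path `0 → 1 → ⋯ → a` together with all arcs out of
the vertices `a, …, n-1`. A walk of length `a + 1` from `i ≤ a` climbs to `a` in `a - i` steps and
then, using the loop at `a`, reaches any vertex in the remaining `i + 1` steps; from `i > a` every
vertex is reachable in any positive number of steps. On the other hand the only walk of length
`k ≤ a` out of `0` ends at `k`, so no closed walk at `0` has length between `1` and `a`. Hence the
exponent is exactly `a + 1`.
-/

namespace Matrix

variable {ι : Type*} [Fintype ι]

lemma mul_apply_pos_of_pos {B C : Matrix ι ι ℕ} {i m j : ι} (hB : 0 < B i m) (hC : 0 < C m j) :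
    0 < (B * C) i j :=
  Finset.sum_pos' (fun _ _ => Nat.zero_le _) ⟨m, Finset.mem_univ _, Nat.mul_pos hB hC⟩

end Matrix

open Matrix

section PathToFull

variable {n : ℕ}

def pathToFull (a : Fin n) : Matrix (Fin n) (Fin n) ℕ :=
  fun i j => if a ≤ i ∨ (j : ℕ) = i + 1 then 1 else 0

lemma pathToFull_apply_eq_zero_or_eq_one (a i j : Fin n) :
    pathToFull a i j = 0 ∨ pathToFull a i j = 1 := by
  unfold pathToFull
  split_ifs <;> simp

lemma pathToFull_pow_apply_of_add_le {a i : Fin n} {k : ℕ} (h : (i : ℕ) + k ≤ a) (j : Fin n) :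
    (pathToFull a ^ k) i j = if (j : ℕ) = i + k then 1 else 0 := by
  induction k generalizing i with
  | zero => simp [Matrix.one_apply, Fin.ext_iff, eq_comm]
  | succ k ih =>
    have hi : (i : ℕ) + 1 < n := by omega
    have hia : ¬ a ≤ i := by rw [Fin.le_iff_val_le_val]; omega
    rw [pow_succ', mul_apply, Finset.sum_eq_single ⟨i + 1, hi⟩]
    · simp [pathToFull, hia, ih (i := ⟨i + 1, hi⟩) (by simp only; omega), add_assoc, add_comm 1 k]
    · intro m _ hm
      have hm' : (m : ℕ) ≠ i + 1 := fun h => hm (Fin.ext h)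
      simp [pathToFull, hia, hm']
    · simp

lemma pathToFull_pow_apply_pos {a i : Fin n} (hi : a ≤ i) {k : ℕ} (hk : 0 < k) (j : Fin n) :
    0 < (pathToFull a ^ k) i j := by
  induction k, hk using Nat.le_induction generalizing i j with
  | base => simp [pathToFull, hi]
  | succ k _ ih =>
    rw [pow_succ']
    exact mul_apply_pos_of_pos (m := a) (by simp [pathToFull, hi]) (ih le_rfl j)

lemma pathToFull_pow_succ_apply_pos (a i j : Fin n) : 0 < (pathToFull a ^ ((a : ℕ) + 1)) i j := by
  rcases le_or_gt i a with hia | hai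
  · have hclimb : 0 < (pathToFull a ^ ((a : ℕ) - i)) i a := by
      rw [pathToFull_pow_apply_of_add_le (by omega)]
      simp [Fin.le_iff_val_le_val.mp hia]
    have hsplit : (a : ℕ) + 1 = ((a : ℕ) - i) + ((i : ℕ) + 1) := by
      have := Fin.le_iff_val_le_val.mp hia; omega
    rw [hsplit, pow_add]
    exact mul_apply_pos_of_pos hclimb (pathToFull_pow_apply_pos le_rfl (Nat.succ_pos _) j)
  · exact pathToFull_pow_apply_pos hai.le (Nat.succ_pos _) j

lemma pathToFull_pow_apply_zero_zero {a : Fin n} {k : ℕ} (hk : 0 < k) (hka : k ≤ a) :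
    (pathToFull a ^ k) ⟨0, a.pos⟩ ⟨0, a.pos⟩ = 0 := by
  rw [pathToFull_pow_apply_of_add_le (by simpa using hka)]
  simp [hk.ne]

theorem isLeast_pathToFull_exponent (a : Fin n) :
    IsLeast {k : ℕ | 0 < k ∧ ∀ i j, 0 < (pathToFull a ^ k) i j} ((a : ℕ) + 1) := by
  refine ⟨⟨Nat.succ_pos _, pathToFull_pow_succ_apply_pos a⟩, fun k ⟨hk, hpos⟩ => ?_⟩
  by_contra! hka
  have := hpos ⟨0, a.pos⟩ ⟨0, a.pos⟩
  rw [pathToFull_pow_apply_zero_zero hk (by omega)] at this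
  exact this.false

end PathToFull

theorem exists_primitive_matrix_with_exponent_general (n : ℕ) (t : ℕ)
    (ht1 : 1 ≤ t) (ht2 : t ≤ n) :
    ∃ A : Matrix (Fin n) (Fin n) ℕ,
      (∀ i j, A i j = 0 ∨ A i j = 1) ∧
      IsLeast {k : ℕ | 0 < k ∧ ∀ i j, 0 < (A ^ k) i j} t := by
  let a : Fin n := ⟨t - 1, by omega⟩
  have hta : t = (a : ℕ) + 1 := by simp only [a]; omega
  exact ⟨pathToFull a, pathToFull_apply_eq_zero_or_eq_one a, hta ▸ isLeast_pathToFull_exponent a⟩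

/-- For `n ≥ 3` and every `1 ≤ t ≤ n`, there exists an `n × n` primitive 0-1 matrix
whose primitive exponent equals `t`. -/
theorem exists_primitive_matrix_with_exponent (n : ℕ) (hn : 3 ≤ n) (t : ℕ)
    (ht1 : 1 ≤ t) (ht2 : t ≤ n) :
    ∃ A : Matrix (Fin n) (Fin n) ℕ,
      (∀ i j, A i j = 0 ∨ A i j = 1) ∧
      IsLeast {k : ℕ | 0 < k ∧ ∀ i j, 0 < (A ^ k) i j} t :=
  exists_primitive_matrix_with_exponent_general n t ht1 ht2
end
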